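/- Let f : 2^ω → 2 be such that f^{-1}(1) is a filter (possibly empty). If f is discontinuous, then ⋀ ∈ ⟨f, ∧⟩, where ⋀ : 2^ω → 2 is countably infinite conjunction and ∧ : 2^2 → 2 is binary conjunction. -/

import Mathlib

open scoped Classical

/-- An arity: `some n` is the finite arity `n ≥ 1`; `none` is the countably infinite arity ω. -/
abbrev Arity := Option ℕ+

/-- The index set of an arity. -/
abbrev Idx : Arity → Type
  | some n => Fin (n : ℕ)
  | none => ℕ

/-- A Boolean function of some arity `1 ≤ n ≤ ω`.  The input space `Idx a → Bool`
carries the product topology (with `Bool` discrete), the product σ-algebra (= Borel),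
and the coordinatewise partial order. -/
abbrev BFun : Type := Σ a : Arity, (Idx a → Bool) → Bool

/-- A clone: a set of Boolean functions of arities `1 ≤ n ≤ ω` containing all projections
and closed under composition. -/
structure IsClone (F : Set BFun) : Prop where
  proj : ∀ (a : Arity) (i : Idx a), (⟨a, fun x => x i⟩ : BFun) ∈ F
  comp : ∀ (a b : Arity) (g : (Idx a → Bool) → Bool) (f : Idx a → (Idx b → Bool) → Bool),
      (⟨a, g⟩ : BFun) ∈ F → (∀ i, (⟨b, f i⟩ : BFun) ∈ F) →
      (⟨b, fun x => g fun i => f i x⟩ : BFun) ∈ F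

/-- The clone generated by a set of Boolean functions. -/
def cloneGen (G : Set BFun) : Set BFun := ⋂₀ {F : Set BFun | IsClone F ∧ G ⊆ F}

/-- `f` has finite arity. -/
def finitary (f : BFun) : Prop := f.1 ≠ none

/-- `f` is Borel: the preimage of `1` is a Borel set. -/
def IsBorelFun (f : BFun) : Prop := MeasurableSet {x | f.2 x = true}

/-- `f` is continuous (equivalently, depends on only finitely many coordinates). -/
def IsContFun (f : BFun) : Prop := Continuous f.2

/-- `f(0⃗) = 0`. -/
def PresBot (f : BFun) : Prop := f.2 (fun _ => false) = false

/-- `f(1⃗) = 1`. -/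
def PresTop (f : BFun) : Prop := f.2 (fun _ => true) = true

/-- `f` vanishes on a neighborhood of `0⃗`, i.e. `0⃗` is not in the closure of `f⁻¹(1)`. -/
def VanishNearBot (f : BFun) : Prop := (fun _ => false) ∉ closure {x | f.2 x = true}

/-- `f` equals `1` on a neighborhood of `1⃗`, i.e. `1⃗` is not in the closure of `f⁻¹(0)`. -/
def OneNearTop (f : BFun) : Prop := (fun _ => true) ∉ closure {x | f.2 x = false}

/-- Countably infinite disjunction `⋁ : 2^ω → 2`. -/
noncomputable def bigOr : (ℕ → Bool) → Bool := fun x => decide (∃ i, x i = true)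

/-- Countably infinite conjunction `⋀ : 2^ω → 2`. -/
noncomputable def bigAnd : (ℕ → Bool) → Bool := fun x => decide (∀ i, x i = true)

/-- `liminf : 2^ω → 2`, equal to `1` iff all but finitely many bits are `1`. -/
noncomputable def liminfF : (ℕ → Bool) → Bool := fun x => decide (∃ N, ∀ j, N ≤ j → x j = true)

/-- `A ⊆ 2^ι` is a filter: upward-closed and closed under coordinatewise binary meets. -/
def IsFilterSet {ι : Type} (A : Set (ι → Bool)) : Prop :=
  (∀ x y : ι → Bool, x ≤ y → x ∈ A → y ∈ A) ∧
  (∀ x y : ι → Bool, x ∈ A → y ∈ A → (fun i => x i && y i) ∈ A)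

/-- Binary conjunction `∧ : 2^2 → 2` as a Boolean function of arity 2. -/
def and2 : BFun := ⟨some 2, fun x => x ⟨0, by norm_num⟩ && x ⟨1, by norm_num⟩⟩

noncomputable def prefAnd (ρ : ℕ → ℕ) (n : ℕ) : (ℕ → Bool) → Bool :=
  fun x => decide (∀ j < n + 1, x (ρ j) = true)

lemma prefAnd_mem {F : Set BFun} (hF : IsClone F) (hand : and2 ∈ F) (ρ : ℕ → ℕ) (n : ℕ) :
    (⟨none, prefAnd ρ n⟩ : BFun) ∈ F := by
  induction n with
  | zero =>
      have h : prefAnd ρ 0 = fun x => x (ρ 0) := by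
        funext x
        cases hx : x (ρ 0) <;> simp [prefAnd, Nat.lt_one_iff, hx]
      rw [h]; exact hF.proj none (ρ 0)
  | succ n ih =>
      set F2 : Fin 2 → (ℕ → Bool) → Bool :=
        fun i => if (i : ℕ) = 0 then prefAnd ρ n else fun x => x (ρ (n+1)) with hF2
      have hF2mem : ∀ i, (⟨none, F2 i⟩ : BFun) ∈ F := by
        intro i
        by_cases hi : (i : ℕ) = 0
        · simp only [hF2, hi, if_true]; exact ih
        · simp only [hF2, hi, if_false]; exact hF.proj none (ρ (n+1))
      have hmem := hF.comp (some 2) none and2.2 F2 hand hF2mem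
      have heq : (fun x => and2.2 fun i => F2 i x) = prefAnd ρ (n + 1) := by
        funext x
        show (F2 ⟨0, by norm_num⟩ x && F2 ⟨1, by norm_num⟩ x) = _
        have e0 : F2 ⟨0, by norm_num⟩ x = prefAnd ρ n x := by simp [hF2]
        have e1 : F2 ⟨1, by norm_num⟩ x = x (ρ (n+1)) := by simp [hF2]
        rw [e0, e1]
        cases hp : prefAnd ρ n x <;> cases hx : x (ρ (n+1)) <;>
          simp only [prefAnd, decide_eq_true_eq, decide_eq_false_iff_not] at hp hx ⊢ <;>
          simp_all [Nat.le_succ_iff, or_imp, forall_and, exists_or]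
      rw [← heq]
      exact hmem

lemma isOpen_agree (a : ℕ → Bool) (k : ℕ) : IsOpen {z : ℕ → Bool | ∀ i < k, z i = a i} := by
  have h : {z : ℕ → Bool | ∀ i < k, z i = a i} = Set.pi (Set.Iio k) (fun i => {a i}) := by
    ext z; simp [Set.mem_pi]
  rw [h]
  exact isOpen_set_pi (Set.finite_Iio k) (fun i _ => isOpen_discrete _)

lemma cont_of_open (f : (ℕ → Bool) → Bool) (h1 : IsOpen {x | f x = true})
    (h2 : IsOpen {x | f x = false}) : Continuous f := by
  rw [continuous_def]
  intro s _
  by_cases ht : true ∈ s <;> by_cases hf : false ∈ s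
  · have h : f ⁻¹' s = Set.univ := by
      ext x; cases hx : f x <;> simp [hx, ht, hf]
    rw [h]; exact isOpen_univ
  · have h : f ⁻¹' s = {x | f x = true} := by
      ext x; cases hx : f x <;> simp [hx, ht, hf]
    rw [h]; exact h1
  · have h : f ⁻¹' s = {x | f x = false} := by
      ext x; cases hx : f x <;> simp [hx, ht, hf]
    rw [h]; exact h2
  · have h : f ⁻¹' s = ∅ := by
      ext x; cases hx : f x <;> simp [hx, ht, hf]
    rw [h]; exact isOpen_empty

/-- If `f : 2^ω → 2` is the indicator of a (possibly empty) filter and `f` is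
discontinuous, then countable conjunction `⋀ ∈ ⟨f, ∧⟩`. -/
theorem bigAnd_mem_cloneGen_of_filter_discontinuous (f : (ℕ → Bool) → Bool)
    (hFil : IsFilterSet {x | f x = true})
    (hDisc : ¬ Continuous f) :
    (⟨none, bigAnd⟩ : BFun) ∈ cloneGen {(⟨none, f⟩ : BFun), and2} := by
  obtain ⟨hup, hmeet⟩ := hFil
  have htop : f (fun _ => true) = true := by
    by_contra h
    apply hDisc
    have hconst : f = fun _ => false := by
      funext x
      cases hx : f x with
      | false => rfl
      | true => exact absurd (hup x (fun _ => true) (fun i => Bool.le_true _) hx) h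
    rw [hconst]; exact continuous_const
  -- extract the witness sequence c
  have hkey : ∃ c : ℕ → ℕ → Bool, (∀ k, f (c k) = false) ∧ (∀ k i, i < k → c k i = true) := by
    have hOpen : ¬ IsOpen {x | f x = true} ∨ ¬ IsOpen {x | f x = false} := by
      by_contra h
      push_neg at h
      exact hDisc (cont_of_open f h.1 h.2)
    rcases hOpen with hO | hO
    · -- A not open : a witness a ∈ A in the closure of Aᶜ
      have hns : ¬ {x | f x = true} ⊆ interior {x | f x = true} :=
        fun h => hO (subset_interior_iff_isOpen.mp h)
      obtain ⟨a, ha, hai⟩ := Set.not_subset.mp hns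
      have hacl : a ∈ closure {x : ℕ → Bool | f x = true}ᶜ := by
        rw [closure_compl]; exact hai
      have hy : ∀ k, ∃ y, f y = false ∧ ∀ i < k, y i = a i := by
        intro k
        obtain ⟨y, hy1, hy2⟩ :=
          mem_closure_iff.mp hacl _ (isOpen_agree a k) (fun i _ => rfl)
        refine ⟨y, ?_, hy1⟩
        simpa using hy2
      choose y hy1 hy2 using hy
      refine ⟨fun k i => (a i && y k i) || !a i, ?_, ?_⟩
      · intro k
        by_contra hc
        have hck : f (fun i => (a i && y k i) || !a i) = true := eq_true_of_ne_false hc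
        have hm := hmeet _ a hck ha
        have he : (fun i => ((a i && y k i) || !a i) && a i) = (fun i => a i && y k i) := by
          funext i; cases a i <;> cases y k i <;> rfl
        rw [he] at hm
        have hyk : f (y k) = true := by
          refine hup _ (y k) (fun i => ?_) hm
          cases a i <;> cases y k i <;> simp
        rw [hy1 k] at hyk; exact Bool.false_ne_true hyk
      · intro k i hik
        show ((a i && y k i) || !a i) = true
        rw [hy2 k i hik]
        cases a i <;> rfl
    · -- Aᶜ not open : a witness a ∉ A in the closure of A
      have hAc : {x : ℕ → Bool | f x = false} = {x | f x = true}ᶜ := by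
        ext x; cases hx : f x <;> simp [hx]
      have hns : ¬ {x | f x = false} ⊆ interior {x | f x = false} :=
        fun h => hO (subset_interior_iff_isOpen.mp h)
      obtain ⟨a, ha, hai⟩ := Set.not_subset.mp hns
      have hacl : a ∈ closure {x : ℕ → Bool | f x = false}ᶜ := by
        rw [closure_compl]; exact hai
      have hccl : a ∈ closure {x : ℕ → Bool | f x = true} := by
        have : {x : ℕ → Bool | f x = false}ᶜ = {x | f x = true} := by
          ext x; cases hx : f x <;> simp [hx]
        rwa [this] at hacl
      have hfa : f a = false := ha
      have hy : ∀ k, ∃ y, f y = true ∧ ∀ i < k, y i = a i := by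
        intro k
        obtain ⟨y, hy1, hy2⟩ :=
          mem_closure_iff.mp hccl _ (isOpen_agree a k) (fun i _ => rfl)
        exact ⟨y, hy2, hy1⟩
      choose y hy1 hy2 using hy
      refine ⟨fun k i => a i || !(y k i), ?_, ?_⟩
      · intro k
        by_contra hc
        have hck : f (fun i => a i || !(y k i)) = true := eq_true_of_ne_false hc
        have hm := hmeet _ (y k) hck (hy1 k)
        have he : (fun i => (a i || !(y k i)) && y k i) = (fun i => a i && y k i) := by
          funext i; cases a i <;> cases y k i <;> rfl
        rw [he] at hm
        have hfa' : f a = true := by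
          refine hup _ a (fun i => ?_) hm
          cases a i <;> cases y k i <;> simp
        rw [hfa] at hfa'; exact Bool.false_ne_true hfa'
      · intro k i hik
        show (a i || !(y k i)) = true
        rw [hy2 k i hik]
        cases a i <;> rfl
  obtain ⟨c, hc1, hc2⟩ := hkey
  set σ : ℕ → ℕ → ℕ := fun i j => if c j i = false then j else i with hσ
  refine Set.mem_sInter.mpr ?_
  rintro F ⟨hFc, hFg⟩
  have hfF : (⟨none, f⟩ : BFun) ∈ F := hFg (Set.mem_insert _ _)
  have handF : and2 ∈ F := hFg (Set.mem_insert_of_mem _ rfl)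
  have hmem := hFc.comp none none f (fun i => prefAnd (σ i) i) hfF
    (fun i => prefAnd_mem hFc handF _ _)
  have heq : (fun x => f fun i => prefAnd (σ i) i x) = bigAnd := by
    funext x
    by_cases hx : ∀ i, x i = true
    · have h1 : (fun i => prefAnd (σ i) i x) = fun _ => true := by
        funext i; simp [prefAnd, hx]
      rw [h1, htop]
      simp [bigAnd, hx]
    · have hxk := hx
      push_neg at hxk
      obtain ⟨k, hk⟩ := hxk
      have hk' : x k = false := Bool.eq_false_iff.mpr hk
      have hle : ∀ i, prefAnd (σ i) i x = true → c k i = true := by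
        intro i hi
        by_contra hci
        have hci' : c k i = false := Bool.eq_false_iff.mpr hci
        rcases Nat.lt_or_ge i k with h | h
        · exact hci (hc2 k i h)
        · have hxσ : x (σ i k) = true := by
            simp only [prefAnd, decide_eq_true_eq] at hi
            exact hi k (Nat.lt_succ_of_le h)
          rw [hσ] at hxσ
          simp only [hci', if_true] at hxσ
          exact hk hxσ
      have hba : bigAnd x = false := by
        simp only [bigAnd, decide_eq_false_iff_not]
        exact hx
      rw [hba]
      by_contra hcf
      have hft : f (fun i => prefAnd (σ i) i x) = true := eq_true_of_ne_false hcf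
      have hck : f (c k) = true :=
        hup _ (c k) (fun i => Bool.le_iff_imp.mpr (hle i)) hft
      rw [hc1 k] at hck; exact Bool.false_ne_true hck
  rw [← heq]
  exact hmem
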